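/- Let (Ω, ℙ) be a probability space, σ : Ω → Ω an ergodic measure-preserving transformation, C : Ω → (0,∞) measurable, and (Λ_n) a sequence of positive reals with Λ_n → ∞. Then for ℙ-almost every ω there exists a set B(ω) ⊂ ℕ of asymptotic density zero such that C(σⁿω) ≤ Λ_n for all n ∉ B(ω). -/

import Mathlib

/-!
For fixed `k`, `Λ n ≥ k` for all large `n`, so the bad set is eventually contained in the set of
times at which the orbit visits `{C > k}`. It therefore suffices that along almost every orbit the
visit frequency of `{C > k}` is at most `ℙ {C > k}`, which tends to `0` as `k → ∞`.

For measurable `0 ≤ f ≤ K` this upper half of Birkhoff's theorem has a short direct proof. The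
limsup of the Birkhoff averages is `σ`-invariant, hence a.e. equal to a constant `u`. For
`0 < c < u`, let `D` be the set of points whose Birkhoff sums stay below `c n` for all
`1 ≤ n ≤ M`. The orbit of every point splits into consecutive blocks of length at most `M` on which
the sum of `f + c 𝟙_D` is at least `c` times the length, so integrating gives `c ≤ ∫ f + c ℙ D`;
and `ℙ D → 0` as `M → ∞`.
-/

open MeasureTheory Filter Topology
open scoped Classical

def densityZero (B : Set ℕ) : Prop :=
  Tendsto (fun N : ℕ => (((Finset.range (N + 1)).filter (fun n => n ∈ B)).card : ℝ) / N)
    atTop (𝓝 0)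

open Finset

lemma limsup_eq_limsup_of_tendsto_sub {ι : Type*} {l : Filter ι} [l.NeBot] {u v : ι → ℝ}
    (hv : IsBoundedUnder (· ≤ ·) l v) (hv' : IsBoundedUnder (· ≥ ·) l v)
    (h : Tendsto (u - v) l (𝓝 0)) : limsup u l = limsup v l := by
  have hu : u = v + (u - v) := by abel
  have hw := h.isBoundedUnder_le
  have hw' := h.isBoundedUnder_ge
  have hvc := hv'.isCoboundedUnder_flip
  apply le_antisymm
  · calc limsup u l = limsup (v + (u - v)) l := by rw [← hu]
      _ ≤ limsup v l + limsup (u - v) l := limsup_add_le hv' hv h.isCoboundedUnder_le hw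
      _ = limsup v l := by rw [h.limsup_eq, add_zero]
  · calc limsup v l = limsup v l + liminf (u - v) l := by rw [h.liminf_eq, add_zero]
      _ ≤ limsup (v + (u - v)) l := le_limsup_add hv hvc hw hw'
      _ = limsup u l := by rw [← hu]

section Measure

variable {α : Type*} [MeasurableSpace α] {μ : Measure α} [IsFiniteMeasure μ]

lemma tendsto_measureReal_iInter_atTop {s : ℕ → Set α}
    (hs : ∀ n, MeasurableSet (s n)) (hanti : Antitone s) :
    Tendsto (fun n => μ.real (s n)) atTop (𝓝 (μ.real (⋂ n, s n))) :=
  (ENNReal.tendsto_toReal (measure_ne_top μ _)).comp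
    (tendsto_measure_iInter_atTop (fun n => (hs n).nullMeasurableSet) hanti ⟨0, measure_ne_top μ _⟩)

lemma tendsto_measureReal_setOf_natCast_lt {C : α → ℝ} (hC : Measurable C) :
    Tendsto (fun k : ℕ => μ.real {x | k < C x}) atTop (𝓝 0) := by
  have hempty : ⋂ k : ℕ, {x | (k : ℝ) < C x} = ∅ :=
    Set.eq_empty_of_forall_notMem fun x hx =>
      let ⟨k, hk⟩ := exists_nat_ge (C x)
      (Set.mem_iInter.1 hx k).not_ge hk
  simpa [hempty] using tendsto_measureReal_iInter_atTop (μ := μ)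
    (s := fun k : ℕ => {x | (k : ℝ) < C x}) (fun k => measurableSet_lt measurable_const hC)
    (fun k l hkl x (hx : (l : ℝ) < C x) => (Nat.cast_le.2 hkl).trans_lt hx)

end Measure

section Birkhoff

variable {α : Type*} {σ : α → α} {f g : α → ℝ} {K c : ℝ}

lemma birkhoffSum_nonneg (hg : 0 ≤ g) (n : ℕ) (x : α) : 0 ≤ birkhoffSum σ g n x :=
  sum_nonneg fun _ _ => hg _

lemma birkhoffAverage_nonneg (hf : 0 ≤ f) (n : ℕ) (x : α) : 0 ≤ birkhoffAverage ℝ σ f n x :=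
  smul_nonneg (by positivity) (birkhoffSum_nonneg hf n x)

lemma birkhoffAverage_le (hf : 0 ≤ f) (hK : ∀ x, f x ≤ K) (n : ℕ) (x : α) :
    birkhoffAverage ℝ σ f n x ≤ K := by
  rcases n.eq_zero_or_pos with rfl | hn
  · simpa using (hf x).trans (hK x)
  have hsum : birkhoffSum σ f n x ≤ n * K := by
    simpa [birkhoffSum] using sum_le_sum fun k (_ : k ∈ range n) => hK (σ^[k] x)
  rw [birkhoffAverage, smul_eq_mul, inv_mul_le_iff₀ (by positivity)]
  exact hsum

lemma birkhoffSum_indicator_one {R : Type*} [AddCommMonoidWithOne R] (s : Set α) (n : ℕ) (x : α) :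
    birkhoffSum σ (s.indicator (1 : α → R)) n x = #{k ∈ range n | σ^[k] x ∈ s} := by
  simp [birkhoffSum, Set.indicator_apply]

lemma limsup_birkhoffAverage_apply (hf : 0 ≤ f) (hK : ∀ x, f x ≤ K) (x : α) :
    limsup (fun n => birkhoffAverage ℝ σ f n (σ x)) atTop =
      limsup (fun n => birkhoffAverage ℝ σ f n x) atTop :=
  limsup_eq_limsup_of_tendsto_sub (isBoundedUnder_of ⟨K, fun n => birkhoffAverage_le hf hK n x⟩)
    (isBoundedUnder_of ⟨0, fun n => birkhoffAverage_nonneg hf n x⟩)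
    (tendsto_birkhoffAverage_apply_sub_birkhoffAverage' ℝ
      ((Metric.isBounded_Icc 0 K).subset (Set.range_subset_iff.2 fun y => ⟨hf y, hK y⟩)) σ x)

lemma mul_sub_le_birkhoffSum {M : ℕ} (hg : 0 ≤ g) (hc : 0 ≤ c)
    (h : ∀ x, ∃ n, 0 < n ∧ n ≤ M ∧ c * n ≤ birkhoffSum σ g n x) (N : ℕ) (x : α) :
    c * (N - M) ≤ birkhoffSum σ g N x := by
  induction N using Nat.strong_induction_on generalizing x with
  | _ N ih =>
  rcases le_or_gt N M with hNM | hMN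
  · have : (N : ℝ) - M ≤ 0 := sub_nonpos.2 (by exact_mod_cast hNM)
    exact (mul_nonpos_of_nonneg_of_nonpos hc this).trans (birkhoffSum_nonneg hg N x)
  obtain ⟨n, hn, hnM, hcn⟩ := h x
  have hnN : n ≤ N := hnM.trans hMN.le
  have hrest := ih (N - n) (by omega) (σ^[n] x)
  rw [Nat.cast_sub hnN] at hrest
  rw [← Nat.add_sub_cancel' hnN, birkhoffSum_add, Nat.add_sub_cancel' hnN]
  linarith

def birkhoffSumBelow (σ : α → α) (f : α → ℝ) (c : ℝ) (M : ℕ) : Set α :=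
  {x | ∀ n, 0 < n → n ≤ M → birkhoffSum σ f n x < c * n}

lemma exists_notMem_birkhoffSumBelow (hf : 0 ≤ f) {x : α}
    (hx : c < limsup (fun n => birkhoffAverage ℝ σ f n x) atTop) :
    ∃ M, x ∉ birkhoffSumBelow σ f c M := by
  have hfreq : ∃ᶠ n in atTop, c < birkhoffAverage ℝ σ f n x :=
    frequently_lt_of_lt_limsup (isCoboundedUnder_le_of_le atTop (birkhoffAverage_nonneg hf · x)) hx
  obtain ⟨n, hcn, hn⟩ := (hfreq.and_eventually (eventually_gt_atTop 0)).exists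
  refine ⟨n, fun hx => (hx n hn le_rfl).not_ge ?_⟩
  rw [birkhoffAverage, smul_eq_mul, lt_inv_mul_iff₀ (by positivity)] at hcn
  linarith

lemma antitone_birkhoffSumBelow (σ : α → α) (f : α → ℝ) (c : ℝ) :
    Antitone (birkhoffSumBelow σ f c) :=
  fun _ _ hMM' _ hx n hn hnM => hx n hn (hnM.trans hMM')

section MeasurePreserving

variable [MeasurableSpace α] {μ : Measure α}

lemma measurable_birkhoffSum (hσ : Measurable σ) (hf : Measurable f) (n : ℕ) :
    Measurable (birkhoffSum σ f n) :=
  Finset.measurable_sum _ fun k _ => hf.comp (hσ.iterate k)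

lemma measurable_birkhoffAverage (hσ : Measurable σ) (hf : Measurable f) (n : ℕ) :
    Measurable (birkhoffAverage ℝ σ f n) :=
  (measurable_birkhoffSum hσ hf n).const_smul (n : ℝ)⁻¹

lemma measurableSet_birkhoffSumBelow (hσ : Measurable σ) (hf : Measurable f) (c : ℝ) (M : ℕ) :
    MeasurableSet (birkhoffSumBelow σ f c M) := by
  simp only [birkhoffSumBelow, Set.ofPred_forall]
  exact .iInter fun n => .iInter fun _ => .iInter fun _ =>
    measurableSet_lt (measurable_birkhoffSum hσ hf n) measurable_const

theorem MeasureTheory.MeasurePreserving.integrable_birkhoffSum (hσ : MeasurePreserving σ μ μ)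
    (hg : Integrable g μ) (n : ℕ) : Integrable (birkhoffSum σ g n) μ :=
  integrable_finsetSum _ fun k _ => (hσ.iterate k).integrable_comp_of_integrable hg

theorem MeasureTheory.MeasurePreserving.integral_birkhoffSum (hσ : MeasurePreserving σ μ μ)
    (hg : Integrable g μ) (n : ℕ) : ∫ x, birkhoffSum σ g n x ∂μ = n * ∫ x, g x ∂μ := by
  have hcomp (k : ℕ) : ∫ x, g (σ^[k] x) ∂μ = ∫ x, g x ∂μ := by
    rw [← integral_map (hσ.iterate k).measurable.aemeasurable
      (by rw [(hσ.iterate k).map_eq]; exact hg.aestronglyMeasurable), (hσ.iterate k).map_eq]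
  simp only [birkhoffSum]
  rw [integral_finsetSum (f := fun k x => g (σ^[k] x)) _
    fun k _ => (hσ.iterate k).integrable_comp_of_integrable hg]
  simp [hcomp]

variable [IsProbabilityMeasure μ]

lemma le_integral_of_mul_sub_le_birkhoffSum (hσ : MeasurePreserving σ μ μ) (hg : Integrable g μ)
    {M : ℕ} (h : ∀ N x, c * (N - M) ≤ birkhoffSum σ g N x) : c ≤ ∫ x, g x ∂μ := by
  have hN (N : ℕ) : c * (N - M) ≤ N * ∫ x, g x ∂μ := by
    calc c * (N - M) = ∫ _, c * (N - M) ∂μ := by simp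
      _ ≤ ∫ x, birkhoffSum σ g N x ∂μ :=
        integral_mono (integrable_const _) (hσ.integrable_birkhoffSum hg N) (h N)
      _ = N * ∫ x, g x ∂μ := hσ.integral_birkhoffSum hg N
  have hlim : Tendsto (fun N : ℕ => c - c * M / N) atTop (𝓝 c) := by
    simpa using tendsto_const_nhds.sub (tendsto_const_div_atTop_nhds_zero_nat (c * M))
  refine le_of_tendsto hlim ((eventually_gt_atTop 0).mono fun N hN0 => ?_)
  have hN0' : (0 : ℝ) < N := by exact_mod_cast hN0
  calc c - c * M / N = c * (N - M) / N := by field_simp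
    _ ≤ ∫ x, g x ∂μ := by rw [div_le_iff₀ hN0']; linarith [hN N]

lemma le_integral_add_mul_measureReal_birkhoffSumBelow (hσ : MeasurePreserving σ μ μ)
    (hfm : Measurable f) (hfi : Integrable f μ) (hf : 0 ≤ f) (hc : 0 ≤ c) {M : ℕ} (hM : 0 < M) :
    c ≤ ∫ x, f x ∂μ + c * μ.real (birkhoffSumBelow σ f c M) := by
  set D := birkhoffSumBelow σ f c M
  have hD : MeasurableSet D := measurableSet_birkhoffSumBelow hσ.measurable hfm c M
  have hgi : Integrable (f + D.indicator fun _ => c) μ :=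
    hfi.add ((integrable_const c).indicator hD)
  have hg : 0 ≤ f + D.indicator fun _ => c := fun x =>
    add_nonneg (hf x) (Set.indicator_nonneg (fun _ _ => hc) x)
  have hstep (x : α) :
      ∃ n, 0 < n ∧ n ≤ M ∧ c * n ≤ birkhoffSum σ (f + D.indicator fun _ => c) n x := by
    by_cases hx : x ∈ D
    · exact ⟨1, one_pos, hM, by simpa [birkhoffSum_one, hx] using hf x⟩
    · simp only [D, birkhoffSumBelow, Set.mem_ofPred_eq, not_forall, not_lt] at hx
      obtain ⟨n, hn, hnM, hcn⟩ := hx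
      refine ⟨n, hn, hnM, hcn.trans ?_⟩
      rw [birkhoffSum_add']
      exact le_add_of_nonneg_right (birkhoffSum_nonneg (Set.indicator_nonneg (fun _ _ => hc)) n x)
  calc c ≤ ∫ x, (f + D.indicator fun _ => c) x ∂μ :=
        le_integral_of_mul_sub_le_birkhoffSum hσ hgi (mul_sub_le_birkhoffSum hg hc hstep)
    _ = ∫ x, f x ∂μ + c * μ.real D := by
      rw [integral_add' hfi ((integrable_const c).indicator hD), integral_indicator_const c hD,
        smul_eq_mul, mul_comm]

lemma le_integral_add_mul_measureReal_limsup_le (hσ : MeasurePreserving σ μ μ)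
    (hfm : Measurable f) (hfi : Integrable f μ) (hf : 0 ≤ f) (hc : 0 ≤ c) :
    c ≤ ∫ x, f x ∂μ +
      c * μ.real {x | limsup (fun n => birkhoffAverage ℝ σ f n x) atTop ≤ c} := by
  have hsub : ⋂ M, birkhoffSumBelow σ f c M ⊆
      {x | limsup (fun n => birkhoffAverage ℝ σ f n x) atTop ≤ c} := fun x hx => by
    by_contra hlt
    obtain ⟨M, hM⟩ := exists_notMem_birkhoffSumBelow hf (not_le.1 hlt)
    exact hM (Set.mem_iInter.1 hx M)
  have hlim := tendsto_measureReal_iInter_atTop (μ := μ)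
    (measurableSet_birkhoffSumBelow hσ.measurable hfm c) (antitone_birkhoffSumBelow σ f c)
  calc c ≤ ∫ x, f x ∂μ + c * μ.real (⋂ M, birkhoffSumBelow σ f c M) :=
        ge_of_tendsto (tendsto_const_nhds.add (hlim.const_mul c))
          ((eventually_gt_atTop 0).mono fun M hM =>
            le_integral_add_mul_measureReal_birkhoffSumBelow hσ hfm hfi hf hc hM)
    _ ≤ _ := by have := measureReal_mono (μ := μ) hsub; gcongr

theorem Ergodic.ae_limsup_birkhoffAverage_le_integral (hσ : Ergodic σ μ) (hfm : Measurable f)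
    (hf : 0 ≤ f) (hK : ∀ x, f x ≤ K) :
    ∀ᵐ x ∂μ, limsup (fun n => birkhoffAverage ℝ σ f n x) atTop ≤ ∫ x, f x ∂μ := by
  set F := fun x => limsup (fun n => birkhoffAverage ℝ σ f n x) atTop
  obtain ⟨u, hu⟩ := hσ.toPreErgodic.ae_eq_const_of_ae_eq_comp
    (Measurable.limsup (measurable_birkhoffAverage hσ.measurable hfm))
    (funext (limsup_birkhoffAverage_apply hf hK) : F ∘ σ = F)
  suffices hu_le : u ≤ ∫ x, f x ∂μ by
    filter_upwards [hu] with x hx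
    exact hx.trans_le hu_le
  refine le_of_forall_lt_imp_le_of_dense fun c hc => ?_
  rcases le_or_gt c 0 with hc0 | hc0
  · exact hc0.trans (integral_nonneg hf)
  have hnull : μ.real {x | F x ≤ c} = 0 := by
    rw [measureReal_eq_zero_iff]
    refine measure_mono_null (fun x (hx : F x ≤ c) => ?_) (ae_iff.1 hu)
    exact fun hxu : F x = u => not_lt.2 hx (hxu ▸ hc)
  have hfi : Integrable f μ :=
    .of_bound hfm.aestronglyMeasurable K (ae_of_all _ fun x => by
      rw [Real.norm_of_nonneg (hf x)]; exact hK x)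
  simpa [F, hnull] using
    le_integral_add_mul_measureReal_limsup_le hσ.toMeasurePreserving hfm hfi hf hc0.le

end MeasurePreserving

end Birkhoff

lemma card_filter_range_le_add {B E : Set ℕ} {n₀ : ℕ} (hBE : ∀ n ∈ B, n₀ ≤ n → n ∈ E) (N : ℕ) :
    #{n ∈ range N | n ∈ B} ≤ n₀ + #{n ∈ range N | n ∈ E} := by
  calc #{n ∈ range N | n ∈ B} ≤ #(range n₀ ∪ {n ∈ range N | n ∈ E}) := by
        refine card_le_card fun n hn => ?_
        simp only [mem_filter, mem_range, mem_union] at hn ⊢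
        by_cases h : n < n₀
        · exact .inl h
        · exact .inr ⟨hn.1, hBE n hn.2 (not_lt.1 h)⟩
    _ ≤ n₀ + #{n ∈ range N | n ∈ E} := by simpa using card_union_le (range n₀) _

lemma densityZero_of_eventually_card_le {B : Set ℕ}
    (h : ∀ ε > 0, ∀ᶠ N in atTop, (#{n ∈ range N | n ∈ B} : ℝ) ≤ ε * N) : densityZero B := by
  refine tendsto_order.2
    ⟨fun a ha => .of_forall fun N => ha.trans_le (by positivity), fun a ha => ?_⟩
  have hinv : ∀ᶠ N : ℕ in atTop, (1 : ℝ) / N < a / 2 :=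
    (tendsto_const_div_atTop_nhds_zero_nat 1).eventually (gt_mem_nhds (half_pos ha))
  filter_upwards [h (a / 2) (half_pos ha), hinv, eventually_gt_atTop 0] with N hB hN hN0
  have hN0' : (0 : ℝ) < N := by exact_mod_cast hN0
  have hsucc : #{n ∈ range (N + 1) | n ∈ B} ≤ #{n ∈ range N | n ∈ B} + 1 := by
    rw [range_add_one, filter_insert]
    split_ifs
    · exact card_insert_le _ _
    · exact Nat.le_succ _
  rw [div_lt_iff₀ hN0'] at hN ⊢
  calc (#{n ∈ range (N + 1) | n ∈ B} : ℝ) ≤ #{n ∈ range N | n ∈ B} + 1 := by exact_mod_cast hsucc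
    _ < a / 2 * N + a / 2 * N := by linarith
    _ = a * N := by ring

lemma densityZero_setOf_lt_comp_iterate {α : Type*} {σ : α → α} {C : α → ℝ} {Λ : ℕ → ℝ}
    (hΛ : Tendsto Λ atTop atTop) {x : α}
    (h : ∀ ε > 0, ∃ k : ℕ, ∀ᶠ N in atTop,
      birkhoffAverage ℝ σ ({y | k < C y}.indicator (1 : α → ℝ)) N x < ε) :
    densityZero {n | Λ n < C (σ^[n] x)} := by
  refine densityZero_of_eventually_card_le fun ε hε => ?_
  obtain ⟨k, hk⟩ := h (ε / 2) (half_pos hε)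
  obtain ⟨n₀, hn₀⟩ := eventually_atTop.1 (hΛ.eventually_ge_atTop (k : ℝ))
  have hsub (n : ℕ) (hn : Λ n < C (σ^[n] x)) (hn₀n : n₀ ≤ n) : n ∈ {n | σ^[n] x ∈ {y | k < C y}} :=
    (hn₀ n hn₀n).trans_lt hn
  have hn₀N : ∀ᶠ N : ℕ in atTop, (n₀ : ℝ) / N < ε / 2 :=
    (tendsto_const_div_atTop_nhds_zero_nat _).eventually (gt_mem_nhds (half_pos hε))
  filter_upwards [hk, hn₀N, eventually_gt_atTop 0] with N hA hN hN0
  have hN0' : (0 : ℝ) < N := by exact_mod_cast hN0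
  rw [birkhoffAverage, smul_eq_mul, inv_mul_lt_iff₀ hN0', birkhoffSum_indicator_one] at hA
  rw [div_lt_iff₀ hN0'] at hN
  calc (#{n ∈ range N | n ∈ {n | Λ n < C (σ^[n] x)}} : ℝ)
      ≤ n₀ + #{n ∈ range N | n ∈ {n | σ^[n] x ∈ {y | k < C y}}} := by
        exact_mod_cast card_filter_range_le_add hsub N
    _ ≤ ε * N := by simp only [Set.mem_ofPred_eq] at hA ⊢; linarith

theorem stmt2_general {Ω : Type*} [MeasurableSpace Ω] (ℙ : Measure Ω) [IsProbabilityMeasure ℙ]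
    (σ : Ω → Ω) (hσ : Ergodic σ ℙ)
    (C : Ω → ℝ) (hCmeas : Measurable C)
    (Λ : ℕ → ℝ) (hΛ : Tendsto Λ atTop atTop) :
    ∀ᵐ ω ∂ℙ, ∃ B : Set ℕ, densityZero B ∧ ∀ n : ℕ, n ∉ B → C (σ^[n] ω) ≤ Λ n := by
  set s : ℕ → Set Ω := fun k => {y | k < C y}
  have hs (k : ℕ) : MeasurableSet (s k) := measurableSet_lt measurable_const hCmeas
  have hs₀ (k : ℕ) : 0 ≤ (s k).indicator (1 : Ω → ℝ) := Set.indicator_nonneg fun _ _ => zero_le_one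
  have hs₁ (k : ℕ) (y : Ω) : (s k).indicator (1 : Ω → ℝ) y ≤ 1 :=
    Set.indicator_le_self' (fun _ _ => zero_le_one) y
  have hvisits : ∀ᵐ ω ∂ℙ, ∀ k, limsup (fun N => birkhoffAverage ℝ σ ((s k).indicator 1) N ω) atTop
      ≤ ℙ.real (s k) := by
    refine ae_all_iff.2 fun k => ?_
    simpa [integral_indicator_one (hs k)] using
      hσ.ae_limsup_birkhoffAverage_le_integral (measurable_one.indicator (hs k)) (hs₀ k) (hs₁ k)
  filter_upwards [hvisits] with ω hω
  refine ⟨_, densityZero_setOf_lt_comp_iterate hΛ fun ε hε => ?_, fun n hn => not_lt.1 hn⟩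
  obtain ⟨k, hk⟩ := ((tendsto_measureReal_setOf_natCast_lt (μ := ℙ) hCmeas).eventually
    (gt_mem_nhds hε)).exists
  exact ⟨k, eventually_lt_of_limsup_lt ((hω k).trans_lt hk)
    (isBoundedUnder_of ⟨1, fun N => birkhoffAverage_le (hs₀ k) (hs₁ k) N ω⟩)⟩

/-- For an ergodic base, a positive measurable `C` and thresholds `Λ n → ∞`, almost every
`ω` admits a density-zero bad set `B(ω)` outside of which `C(σⁿω) ≤ Λ n`. -/
theorem stmt2 {Ω : Type*} [MeasurableSpace Ω] (ℙ : Measure Ω) [IsProbabilityMeasure ℙ]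
    (σ : Ω → Ω) (hσ : Ergodic σ ℙ)
    (C : Ω → ℝ) (hCpos : ∀ ω, 0 < C ω) (hCmeas : Measurable C)
    (Λ : ℕ → ℝ) (hΛpos : ∀ n, 0 < Λ n) (hΛ : Tendsto Λ atTop atTop) :
    ∀ᵐ ω ∂ℙ, ∃ B : Set ℕ, densityZero B ∧ ∀ n : ℕ, n ∉ B → C (σ^[n] ω) ≤ Λ n :=
  stmt2_general ℙ σ hσ C hCmeas Λ hΛ
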